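/- Let h0 and h1 be neighboring histograms with ℓ0-sensitivity Δ0 and ℓ∞-sensitivity 1, and let v0 and v1 be the relabeled top-k̄ histograms constructed by keeping common top-k̄ indices with their original counts, assigning common 'bad' labels B_1, B_2, … (in a fixed order) to the uncommon indices of each, and appending a ⊥ element with count h_(k̄+1) + 1 + √2·τ·Φ⁻¹(1−δ). Then v0 and v1 differ in at most Δ0 coordinates and each differing coordinate differs by at most 1; hence ‖v0 − v1‖₂ ≤ √Δ0. -/

import Mathlib

/-!
The `(k̄+1)`-th largest count is the maximum of `h` outside a top-`k̄` set, so it moves by at most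
one between `h0` and `h1`; and paired uncommon indices interleave,
`h1 (e0 c) ≤ h1 (e1 c) ≤ h0 (e0 c) ≤ h1 (e0 c) + 1`. Hence every coordinate of `v0 - v1` is at most
one in absolute value, and each differing coordinate can be charged injectively to an index where
`h0` and `h1` differ: a common index to itself, `B_c` to `e0 c`, and `⊥` to an index whose count
dropped, found just below the top set of `h0` or as the partner of such an index.
-/

open MeasureTheory ProbabilityTheory Finset
open scoped ENNReal NNReal

/-- The `(k+1)`-th largest count of a histogram over a finite index set (0-indexed `k`). -/
noncomputable def kthLargest {ι : Type*} [Fintype ι] (h : ι → ℕ) (k : ℕ) : ℕ :=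
  ((Finset.univ.val.map h).sort (· ≥ ·)).getD k 0

/-- The standard normal CDF `Φ`. -/
noncomputable def stdGaussianCDF (x : ℝ) : ℝ :=
  (gaussianReal 0 1 (Set.Iic x)).toReal

/-- The relabeled histogram: common top-`kbar` indices keep their original counts
(indices outside the common set are zeroed out for both histograms), the `nB`
uncommon indices are enumerated by `e` and assigned the common "bad" labels
`B_1, …, B_nB` (the `Fin nB` summand), and a `⊥` element (the `Unit` summand)
carries the threshold count. -/
noncomputable def relabeled {ι : Type*} [DecidableEq ι] {nB : ℕ}
    (h : ι → ℕ) (C : Finset ι) (e : Fin nB → ι) (thresh : ℝ) :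
    (ι ⊕ Fin nB) ⊕ Unit → ℝ
  | .inl (.inl i) => if i ∈ C then (h i : ℝ) else 0
  | .inl (.inr b) => h (e b)
  | .inr _ => thresh

def IsTopSet {ι α : Type*} [LE α] (h : ι → α) (D : Finset ι) : Prop :=
  ∀ i ∈ D, ∀ j ∉ D, h j ≤ h i

namespace Multiset

variable {α : Type*} [LinearOrder α]

theorem sort_ge_add {s t : Multiset α} (hst : ∀ a ∈ s, ∀ b ∈ t, b ≤ a) :
    (s + t).sort (· ≥ ·) = s.sort (· ≥ ·) ++ t.sort (· ≥ ·) := by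
  refine List.Perm.eq_of_pairwise' (pairwise_sort _ _) ?_ ?_
  · exact List.pairwise_append.2 ⟨pairwise_sort _ _, pairwise_sort _ _,
      fun a ha b hb => hst a ((mem_sort _).1 ha) b ((mem_sort _).1 hb)⟩
  · rw [← coe_eq_coe, ← coe_add, sort_eq, sort_eq, sort_eq]

theorem getD_sort_ge_zero_eq_sup [OrderBot α] (s : Multiset α) :
    (s.sort (· ≥ ·)).getD 0 ⊥ = s.sup := by
  have hmem (b : α) : b ∈ s.sort (· ≥ ·) ↔ b ∈ s := mem_sort _
  have hsorted := pairwise_sort s (· ≥ ·)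
  cases hs : s.sort (· ≥ ·) with
  | nil => rw [← sort_eq s (· ≥ ·), hs]; rfl
  | cons x l =>
    simp only [hs, List.mem_cons, List.pairwise_cons] at hmem hsorted
    rw [List.getD_cons_zero]
    refine le_antisymm (le_sup ((hmem x).1 (Or.inl rfl))) (sup_le.2 fun b hb => ?_)
    exact ((hmem b).2 hb).elim le_of_eq (hsorted.1 b)

end Multiset

theorem kthLargest_card_eq_sup_compl {ι : Type*} [Fintype ι] [DecidableEq ι] {h : ι → ℕ}
    {D : Finset ι} (hD : IsTopSet h D) : kthLargest h D.card = Dᶜ.sup h := by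
  have hsplit : (univ : Finset ι).val = D.val + Dᶜ.val := by
    rw [← union_compl D, ← disjUnion_eq_union _ _ disjoint_compl_right]; rfl
  have hge : ∀ a ∈ D.val.map h, ∀ b ∈ Dᶜ.val.map h, b ≤ a := by
    simp only [Multiset.mem_map, mem_val, mem_compl]
    rintro _ ⟨i, hi, rfl⟩ _ ⟨j, hj, rfl⟩
    exact hD i hi j hj
  rw [kthLargest, hsplit, Multiset.map_add, Multiset.sort_ge_add hge,
    List.getD_append_right _ _ _ _ (by simp), Multiset.length_sort, Multiset.card_map, card_val,
    Nat.sub_self, sup_def]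
  exact Multiset.getD_sort_ge_zero_eq_sup _

section TopSets

variable {ι : Type*} [DecidableEq ι] {f g : ι → ℕ} {D E : Finset ι}

theorem sup_compl_le_sup_compl_add [Fintype ι] {c : ℕ} (hg : IsTopSet g E)
    (hDE : D.card = E.card) (hgf : ∀ i, g i ≤ f i + c) : Eᶜ.sup g ≤ Dᶜ.sup f + c := by
  refine Finset.sup_le fun j hjE => ?_
  rw [mem_compl] at hjE
  by_cases hjD : j ∈ D
  · obtain ⟨i, hi⟩ : (E \ D).Nonempty := by
      rw [← card_pos, ← card_sdiff_comm hDE, card_pos]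
      exact ⟨j, mem_sdiff.2 ⟨hjD, hjE⟩⟩
    rw [mem_sdiff] at hi
    calc g j ≤ g i := hg i hi.1 j hjE
      _ ≤ f i + c := hgf i
      _ ≤ Dᶜ.sup f + c := by grw [le_sup (f := f) (mem_compl.2 hi.2)]
  · grw [hgf j, le_sup (f := f) (mem_compl.2 hjD)]

theorem uncommon_counts_interleave (hgf : ∀ i, g i ≤ f i) (hf : IsTopSet f D)
    (hg : IsTopSet g E) {i j : ι} (hi : i ∈ D \ E) (hj : j ∈ E \ D) : g i ≤ g j ∧ g j ≤ f i := by
  rw [mem_sdiff] at hi hj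
  exact ⟨hg j hj.1 i hi.2, (hgf j).trans (hf i hi.1 j hj.2)⟩

theorem exists_dropped_outside_of_sup_compl_lt [Fintype ι] {n : ℕ} {e e' : Fin n → ι}
    (hgap : ∀ i, f i ≤ g i + 1) (hf : IsTopSet f D) (he : ∀ c, e c ∈ D \ E)
    (he_inj : Function.Injective e) (he' : ∀ j ∈ E \ D, ∃ c, e' c = j)
    (hlt : Eᶜ.sup g < Dᶜ.sup f) :
    ∃ w, f w ≠ g w ∧ w ∉ D ∩ E ∧ ∀ c, e c = w → f (e c) = g (e' c) := by
  -- `j` has a count above `Eᶜ.sup g` outside `D`; if it did not drop, it entered `E`, and then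
  -- its partner `e c₀` under the bad labels dropped.
  obtain ⟨j, hjD, hj⟩ := Finset.lt_sup_iff.1 hlt
  rw [mem_compl] at hjD
  by_cases hfgj : f j = g j
  · have hjE : j ∈ E := by
      by_contra hjE
      have := le_sup (f := g) (mem_compl.2 hjE)
      omega
    obtain ⟨c₀, hc₀⟩ := he' j (mem_sdiff.2 ⟨hjE, hjD⟩)
    obtain ⟨hD, hE⟩ := mem_sdiff.1 (he c₀)
    have := le_sup (f := g) (mem_compl.2 hE)
    have := hf _ hD j hjD
    have := hgap (e c₀)
    refine ⟨e c₀, by omega, fun hDE => hE (mem_inter.1 hDE).2, fun c hc => ?_⟩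
    rw [he_inj hc, hc₀]
    omega
  · exact ⟨j, hfgj, fun hDE => hjD (mem_inter.1 hDE).1,
      fun c hc => absurd (hc ▸ (mem_sdiff.1 (he c)).1) hjD⟩

end TopSets

section Relabeled

variable {ι : Type*} [DecidableEq ι] {n : ℕ} {h0 h1 : ι → ℕ} {C : Finset ι} {e0 e1 : Fin n → ι}
  {t0 t1 : ℝ}

theorem ncard_relabeled_ne_le [Finite ι] [Nonempty ι] (he0C : ∀ c, e0 c ∉ C)
    (he0_inj : Function.Injective e0)
    (hbad : ∀ c, h0 (e0 c) ≠ h1 (e1 c) → h0 (e0 c) ≠ h1 (e0 c))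
    (hbot : t0 ≠ t1 → ∃ w, h0 w ≠ h1 w ∧ w ∉ C ∧ ∀ c, e0 c = w → h0 (e0 c) = h1 (e1 c)) :
    {x | relabeled h0 C e0 t0 x ≠ relabeled h1 C e1 t1 x}.ncard ≤ {i | h0 i ≠ h1 i}.ncard := by
  obtain ⟨w, hw⟩ : ∃ w, t0 ≠ t1 →
      h0 w ≠ h1 w ∧ w ∉ C ∧ ∀ c, e0 c = w → h0 (e0 c) = h1 (e1 c) := by
    by_cases ht : t0 = t1
    · exact ⟨Classical.arbitrary ι, fun h => absurd ht h⟩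
    · exact (hbot ht).imp fun _ hw _ => hw
  have hC (i : ι)
      (hi : relabeled h0 C e0 t0 (.inl (.inl i)) ≠ relabeled h1 C e1 t1 (.inl (.inl i))) :
      i ∈ C := by
    by_contra hiC
    simp [relabeled, hiC] at hi
  have hB (c : Fin n)
      (hc : relabeled h0 C e0 t0 (.inl (.inr c)) ≠ relabeled h1 C e1 t1 (.inl (.inr c))) :
      h0 (e0 c) ≠ h1 (e1 c) := fun h => hc (congrArg Nat.cast h)
  refine Set.ncard_le_ncard_of_injOn (Sum.elim (Sum.elim id e0) fun _ => w) ?_ ?_ (Set.toFinite _)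
  · rintro ((i | c) | u) hx
    · exact fun (h : h0 i = h1 i) => hx (by simp [relabeled, h])
    · exact hbad c (hB c hx)
    · exact (hw hx).1
  · rintro ((i | c) | u) hx ((i' | c') | u') hy hxy <;>
      simp only [Sum.elim_inl, Sum.elim_inr, id] at hxy
    · rw [hxy]
    · exact absurd (hxy ▸ hC i hx) (he0C c')
    · exact absurd (hxy ▸ hC i hx) (hw hy).2.1
    · exact absurd (hxy ▸ hC i' hy) (he0C c)
    · rw [he0_inj hxy]
    · exact absurd ((hw hy).2.2 c hxy) (hB c hx)
    · exact absurd (hxy ▸ hC i' hy) (hw hx).2.1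
    · exact absurd ((hw hx).2.2 c' hxy.symm) (hB c' hy)
    · rfl

theorem abs_relabeled_sub_le_one (hC : ∀ i ∈ C, |(h0 i : ℝ) - h1 i| ≤ 1)
    (hB : ∀ c, |(h0 (e0 c) : ℝ) - h1 (e1 c)| ≤ 1) (ht : |t0 - t1| ≤ 1)
    (x : (ι ⊕ Fin n) ⊕ Unit) : |relabeled h0 C e0 t0 x - relabeled h1 C e1 t1 x| ≤ 1 := by
  rcases x with (i | c) | u
  · by_cases hi : i ∈ C <;> simp [relabeled, hi, hC]
  · exact hB c
  · exact ht

end Relabeled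

theorem abs_natCast_sub_le_one {a b : ℕ} (hba : b ≤ a) (hab : a ≤ b + 1) : |(a : ℝ) - b| ≤ 1 := by
  have hba' : (b : ℝ) ≤ a := Nat.cast_le.2 hba
  have hab' : (a : ℝ) ≤ b + 1 := by exact_mod_cast hab
  rw [abs_le]
  constructor <;> linarith

theorem sqrt_sum_sq_sub_le_sqrt {α : Type*} [Fintype α] {u v : α → ℝ} {N : ℕ}
    (huv : ∀ x, |u x - v x| ≤ 1) (hN : {x | u x ≠ v x}.ncard ≤ N) :
    √(∑ x, (u x - v x) ^ 2) ≤ √N := by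
  classical
  refine Real.sqrt_le_sqrt ?_
  calc ∑ x, (u x - v x) ^ 2 ≤ ∑ x, if u x ≠ v x then (1 : ℝ) else 0 := by
        refine sum_le_sum fun x _ => ?_
        split_ifs with hx
        · exact sq_le_one_iff_abs_le_one _ |>.2 (huv x)
        · simp [not_not.1 hx]
    _ = {x | u x ≠ v x}.ncard := by
        rw [sum_boole, ← Set.ncard_coe_finset, coe_filter]
        simp
    _ ≤ N := by exact_mod_cast hN

theorem relabeled_histograms_sensitivity_general
    {ι : Type*} [Fintype ι] [LinearOrder ι]
    (h0 h1 : ι → ℕ) (kbar Δ0 nB : ℕ) (D0 D1 : Finset ι)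
    (hdom : ∀ i, h1 i ≤ h0 i) (hgap : ∀ i, h0 i ≤ h1 i + 1)
    (hl0 : (Finset.univ.filter (fun i => h0 i ≠ h1 i)).card ≤ Δ0)
    (hcard : kbar + 1 ≤ Fintype.card ι)
    (hcard0 : D0.card = kbar) (hcard1 : D1.card = kbar)
    (htop0 : ∀ i ∈ D0, ∀ j ∉ D0, h0 j < h0 i ∨ (h0 j = h0 i ∧ i < j))
    (htop1 : ∀ i ∈ D1, ∀ j ∉ D1, h1 j < h1 i ∨ (h1 j = h1 i ∧ i < j))
    -- enumerations (in a fixed order) of the uncommon indices of each histogram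
    (e0 : Fin nB → ι) (e1 : Fin nB → ι)
    (he0inj : Function.Injective e0) (he1inj : Function.Injective e1)
    (he0 : ∀ b, e0 b ∈ D0 \ D1) (he1 : ∀ b, e1 b ∈ D1 \ D0)
    (hnB : nB = (D0 \ D1).card)
    (τ : ℝ≥0) (q : ℝ) :
    let v0 := relabeled h0 (D0 ∩ D1) e0
      ((kthLargest h0 kbar : ℝ) + 1 + Real.sqrt 2 * τ * q)
    let v1 := relabeled h1 (D0 ∩ D1) e1
      ((kthLargest h1 kbar : ℝ) + 1 + Real.sqrt 2 * τ * q)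
    Set.ncard {x | v0 x ≠ v1 x} ≤ Δ0 ∧
    (∀ x, |v0 x - v1 x| ≤ 1) ∧
    Real.sqrt (∑ x, (v0 x - v1 x) ^ 2) ≤ Real.sqrt Δ0 := by
  intro v0 v1
  have top0 : IsTopSet h0 D0 := fun i hi j hj => (htop0 i hi j hj).elim le_of_lt fun h => h.1.le
  have top1 : IsTopSet h1 D1 := fun i hi j hj => (htop1 i hi j hj).elim le_of_lt fun h => h.1.le
  have hD : D0.card = D1.card := hcard0.trans hcard1.symm
  have ha : kthLargest h0 kbar = D0ᶜ.sup h0 := hcard0 ▸ kthLargest_card_eq_sup_compl top0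
  have hb : kthLargest h1 kbar = D1ᶜ.sup h1 := hcard1 ▸ kthLargest_card_eq_sup_compl top1
  have hba : D1ᶜ.sup h1 ≤ D0ᶜ.sup h0 := sup_compl_le_sup_compl_add (c := 0) top1 hD hdom
  have hab : D0ᶜ.sup h0 ≤ D1ᶜ.sup h1 + 1 := sup_compl_le_sup_compl_add top0 hD.symm hgap
  have hpair (c : Fin nB) := uncommon_counts_interleave hdom top0 top1 (he0 c) (he1 c)
  have he1_surj (j : ι) (hj : j ∈ D1 \ D0) : ∃ c, e1 c = j := by
    obtain ⟨c, -, hc⟩ := surjOn_of_injOn_of_card_le e1 (s := univ) (fun c _ => he1 c)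
      he1inj.injOn (by simp [hnB, card_sdiff_comm hD]) hj
    exact ⟨c, hc⟩
  have : Nonempty ι := Fintype.card_pos_iff.1 (by omega)
  have hdiff : {x | v0 x ≠ v1 x}.ncard ≤ Δ0 := by
    refine (ncard_relabeled_ne_le (fun c hc => (mem_sdiff.1 (he0 c)).2 (mem_inter.1 hc).2)
      he0inj (fun c _ => by have := hpair c; omega) fun ht => ?_).trans ?_
    · refine exists_dropped_outside_of_sup_compl_lt hgap top0 he0 he0inj he1_surj
        (hba.lt_of_ne fun h => ht ?_)
      rw [ha, hb, h]
    · simpa [← Set.ncard_coe_finset] using hl0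
  have hclose : ∀ x, |v0 x - v1 x| ≤ 1 := by
    refine abs_relabeled_sub_le_one (fun i _ => abs_natCast_sub_le_one (hdom i) (hgap i))
      (fun c => abs_natCast_sub_le_one (hpair c).2 (by have := hpair c; have := hgap (e0 c); omega))
      ?_
    rw [add_sub_add_right_eq_sub, add_sub_add_right_eq_sub, ha, hb]
    exact abs_natCast_sub_le_one hba hab
  exact ⟨hdiff, hclose, sqrt_sum_sq_sub_le_sqrt hclose hdiff⟩

/-- For neighboring histograms `h0 ≥ h1` (gap ≤ 1, at most `Δ0`
differing coordinates), the relabeled top-`kbar` histograms `v0, v1` — common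
top-`kbar` indices with original counts, uncommon indices paired via common bad
labels in a fixed order, and the `⊥` threshold `h_(kbar+1) + 1 + √2·τ·Φ⁻¹(1−δ)` —
differ in at most `Δ0` coordinates, each by at most 1; hence `‖v0 − v1‖₂ ≤ √Δ0`. -/
theorem relabeled_histograms_sensitivity
    {ι : Type*} [Fintype ι] [LinearOrder ι]
    (h0 h1 : ι → ℕ) (kbar Δ0 nB : ℕ) (D0 D1 : Finset ι)
    (hdom : ∀ i, h1 i ≤ h0 i) (hgap : ∀ i, h0 i ≤ h1 i + 1)
    (hl0 : (Finset.univ.filter (fun i => h0 i ≠ h1 i)).card ≤ Δ0)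
    (hcard : kbar + 1 ≤ Fintype.card ι)
    (hcard0 : D0.card = kbar) (hcard1 : D1.card = kbar)
    (htop0 : ∀ i ∈ D0, ∀ j ∉ D0, h0 j < h0 i ∨ (h0 j = h0 i ∧ i < j))
    (htop1 : ∀ i ∈ D1, ∀ j ∉ D1, h1 j < h1 i ∨ (h1 j = h1 i ∧ i < j))
    -- enumerations (in a fixed order) of the uncommon indices of each histogram
    (e0 : Fin nB → ι) (e1 : Fin nB → ι)
    (he0inj : Function.Injective e0) (he1inj : Function.Injective e1)
    (he0 : ∀ b, e0 b ∈ D0 \ D1) (he1 : ∀ b, e1 b ∈ D1 \ D0)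
    (hnB : nB = (D0 \ D1).card)
    (τ : ℝ≥0) (hτ : 0 < τ) (δ : ℝ) (hδ : 0 < δ) (hδ1 : δ < 1)
    (q : ℝ) (hq : stdGaussianCDF q = 1 - δ) :
    let v0 := relabeled h0 (D0 ∩ D1) e0
      ((kthLargest h0 kbar : ℝ) + 1 + Real.sqrt 2 * τ * q)
    let v1 := relabeled h1 (D0 ∩ D1) e1
      ((kthLargest h1 kbar : ℝ) + 1 + Real.sqrt 2 * τ * q)
    Set.ncard {x | v0 x ≠ v1 x} ≤ Δ0 ∧
    (∀ x, |v0 x - v1 x| ≤ 1) ∧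
    Real.sqrt (∑ x, (v0 x - v1 x) ^ 2) ≤ Real.sqrt Δ0 :=
  relabeled_histograms_sensitivity_general h0 h1 kbar Δ0 nB D0 D1 hdom hgap hl0 hcard hcard0 hcard1
    htop0 htop1 e0 e1 he0inj he1inj he0 he1 hnB τ q
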